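/- arXiv:1912.04834 — 3 statements merged into one kernel-verified Lean document; each statement's English description precedes it below -/
import Mathlib

section
/- Let λ be a Young diagram and for each integer i let v_i denote the number of boxes of λ (rotated 45°) in the i-th diagonal column, i.e. v_i is the number of boxes of λ with content i (normalized so the corner box has content 0). Then v_0 + Σ_{i∈ℤ} v_i·v_{i+1} = Σ_{i∈ℤ} v_i², i.e. the dimension 2(v_0 + Σ_i v_i v_{i+1} − Σ_i v_i²) of the associated A_∞ Nakajima quiver variety X_λ is zero. -/
/-!
Along the diagonals of negative content the counts `v c` grow by steps of `0` or `1`, along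
those of nonnegative content they shrink by such steps. Hence
`(v (c + 1) - v c) ^ 2 = |v (c + 1) - v c|`. Summed over `c`, the left side gives
`2 (∑ v c ^ 2 - ∑ v c v (c + 1))`, while the right side telescopes, from both ends, to `2 v 0`.
-/

open Function

section Telescoping

variable {M : Type*} [AddCommGroup M]

theorem finsum_comp_add_one (g : ℤ → M) : ∑ᶠ c, g (c + 1) = ∑ᶠ c, g c :=
  finsum_comp_equiv (Equiv.addRight 1)

theorem finsum_sub_comp_add_one {g : ℤ → M} (hg : HasFiniteSupport g) :
    ∑ᶠ c, (g c - g (c + 1)) = 0 := by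
  rw [finsum_sub_distrib hg (hg.fun_comp_of_injective (add_left_injective 1)),
    finsum_comp_add_one, sub_self]

end Telescoping

theorem add_finsum_mul_add_one_eq_finsum_mul_self {f : ℤ → ℤ} (hf : HasFiniteSupport f)
    (hneg : ∀ c < 0, f c ≤ f (c + 1) ∧ f (c + 1) ≤ f c + 1)
    (hnonneg : ∀ c, 0 ≤ c → f (c + 1) ≤ f c ∧ f c ≤ f (c + 1) + 1) :
    f 0 + ∑ᶠ c, f c * f (c + 1) = ∑ᶠ c, f c * f c := by
  -- `s c * (f c - f (c + 1)) = |f (c + 1) - f c|`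
  set s : ℤ → ℤ := fun c => if 0 ≤ c then 1 else -1 with hs
  have hstep : ∀ c, (f (c + 1) - f c) ^ 2 = s c * (f c - f (c + 1)) := by
    intro c
    by_cases hc : 0 ≤ c
    · obtain h | h : f c = f (c + 1) ∨ f c = f (c + 1) + 1 := by have := hnonneg c hc; omega
      all_goals simp [hs, hc, h]
    · obtain h | h : f (c + 1) = f c ∨ f (c + 1) = f c + 1 := by have := hneg c (by omega); omega
      all_goals simp [hs, hc, h]
  have hjump : ∑ᶠ c, (s (c + 1) - s c) * f (c + 1) = 2 * f 0 := by
    rw [finsum_eq_single _ (-1)]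
    · norm_num [hs]
    · intro c hc
      have : 0 ≤ c + 1 ↔ 0 ≤ c := by omega
      simp [hs, this]
  have hdecomp : ∀ c, 2 * (f c * f c - f c * f (c + 1)) =
      (s c * f c - s (c + 1) * f (c + 1)) + (s (c + 1) - s c) * f (c + 1)
        + (f c * f c - f (c + 1) * f (c + 1)) := fun c => by linear_combination hstep c
  have hsum : 2 * (∑ᶠ c, f c * f c - ∑ᶠ c, f c * f (c + 1)) = 2 * f 0 := by
    rw [← finsum_sub_distrib (by fun_prop) (by fun_prop (disch := exact add_left_injective 1)),
      mul_finsum, finsum_congr hdecomp,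
      finsum_add_distrib (by fun_prop (disch := exact add_left_injective 1))
        (by fun_prop (disch := exact add_left_injective 1)),
      finsum_add_distrib (by fun_prop (disch := exact add_left_injective 1))
        (by fun_prop (disch := exact add_left_injective 1)),
      finsum_sub_comp_add_one (g := fun c => s c * f c) (by fun_prop),
      finsum_sub_comp_add_one (g := fun c => f c * f c) (by fun_prop), hjump, zero_add, add_zero]
  linarith

def contentRows (lam : ℕ → ℕ) (c : ℤ) : Set ℕ :=
  {j : ℕ | 0 ≤ c + (j : ℤ) ∧ c + (j : ℤ) < (lam j : ℤ)}

section contentRows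

variable {lam : ℕ → ℕ} {c : ℤ}

theorem contentRows_subset_Iio (hanti : Antitone lam) {N : ℕ} (hN : lam N = 0) :
    contentRows lam c ⊆ Set.Iio N := by
  intro j ⟨_, hj⟩
  by_contra hjN
  have := hanti (not_lt.mp hjN)
  omega

theorem contentRows_finite (hanti : Antitone lam) {N : ℕ} (hN : lam N = 0) :
    (contentRows lam c).Finite :=
  (Set.finite_Iio N).subset (contentRows_subset_Iio hanti hN)

theorem mem_Ico_of_contentRows_nonempty (hanti : Antitone lam) {N : ℕ} (hN : lam N = 0)
    (h : (contentRows lam c).Nonempty) : c ∈ Set.Ico (-(N : ℤ)) (lam 0) := by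
  obtain ⟨j, hj⟩ := h
  have hjN : j < N := contentRows_subset_Iio hanti hN hj
  have := hanti (Nat.zero_le j)
  obtain ⟨_, _⟩ := hj
  constructor <;> omega

theorem contentRows_add_one_subset (hc : 0 ≤ c) : contentRows lam (c + 1) ⊆ contentRows lam c :=
  fun _ ⟨_, hj⟩ => ⟨by omega, by omega⟩

theorem contentRows_add_one_subset_insert :
    contentRows lam (c + 1) ⊆ insert (-(c + 1)).toNat (contentRows lam c) := by
  intro j ⟨hj₀, hj⟩
  by_cases h : c + 1 + j = 0
  · left; omega
  · right; exact ⟨by omega, by omega⟩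

theorem contentRows_subset_insert_zero_image_succ (hanti : Antitone lam) :
    contentRows lam c ⊆ insert 0 (Nat.succ '' contentRows lam (c + 1)) := by
  rintro (_ | j) ⟨hj₀, hj⟩
  · exact Set.mem_insert 0 _
  · have : lam (j + 1) ≤ lam j := hanti (Nat.le_succ j)
    exact Or.inr ⟨j, ⟨by omega, by omega⟩, rfl⟩

theorem zero_notMem_contentRows (hc : c < 0) : 0 ∉ contentRows lam c :=
  fun ⟨h, _⟩ => by omega

theorem card_contentRows_unit_step_up_of_neg (hanti : Antitone lam) {N : ℕ} (hN : lam N = 0)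
    (hc : c < 0) :
    Nat.card (contentRows lam c) ≤ Nat.card (contentRows lam (c + 1)) ∧
      Nat.card (contentRows lam (c + 1)) ≤ Nat.card (contentRows lam c) + 1 := by
  simp only [Nat.card_coe_set_eq]
  constructor
  · calc (contentRows lam c).ncard
        ≤ (Nat.succ '' contentRows lam (c + 1)).ncard :=
          Set.ncard_le_ncard ((Set.subset_insert_iff_of_notMem (zero_notMem_contentRows hc)).mp
            (contentRows_subset_insert_zero_image_succ hanti))
            ((contentRows_finite hanti hN).image _)
      _ = (contentRows lam (c + 1)).ncard := Set.ncard_image_of_injective _ Nat.succ_injective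
  · calc (contentRows lam (c + 1)).ncard
        ≤ (insert (-(c + 1)).toNat (contentRows lam c)).ncard :=
          Set.ncard_le_ncard contentRows_add_one_subset_insert
            ((contentRows_finite hanti hN).insert _)
      _ ≤ (contentRows lam c).ncard + 1 := Set.ncard_insert_le _ _

theorem card_contentRows_unit_step_down_of_nonneg (hanti : Antitone lam) {N : ℕ} (hN : lam N = 0)
    (hc : 0 ≤ c) :
    Nat.card (contentRows lam (c + 1)) ≤ Nat.card (contentRows lam c) ∧
      Nat.card (contentRows lam c) ≤ Nat.card (contentRows lam (c + 1)) + 1 := by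
  simp only [Nat.card_coe_set_eq]
  constructor
  · exact Set.ncard_le_ncard (contentRows_add_one_subset hc) (contentRows_finite hanti hN)
  · calc (contentRows lam c).ncard
        ≤ (insert 0 (Nat.succ '' contentRows lam (c + 1))).ncard :=
          Set.ncard_le_ncard (contentRows_subset_insert_zero_image_succ hanti)
            (((contentRows_finite hanti hN).image _).insert _)
      _ ≤ (Nat.succ '' contentRows lam (c + 1)).ncard + 1 := Set.ncard_insert_le _ _
      _ = (contentRows lam (c + 1)).ncard + 1 := by
          rw [Set.ncard_image_of_injective _ Nat.succ_injective]

end contentRows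

/-- The A-infinity Nakajima quiver variety `X_λ` attached to a Young diagram `λ`
is zero dimensional: `v₀ + Σᵢ vᵢ v_{i+1} = Σᵢ vᵢ²`, where `vᵢ` is the number of
boxes of `λ` of content `i`. Rows of `λ` are 0-indexed: box `(j, i)` (row `j`,
column `i`, both 0-indexed) belongs to `λ` iff `i < lam j`, and has content `i - j`. -/
theorem stmt_0 (lam : ℕ → ℕ) (hanti : Antitone lam) (hfin : ∃ N, lam N = 0)
    (v : ℤ → ℕ)
    (hv : ∀ c : ℤ, v c = Nat.card {j : ℕ | 0 ≤ c + (j : ℤ) ∧ c + (j : ℤ) < (lam j : ℤ)}) :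
    v 0 + ∑ᶠ i : ℤ, v i * v (i + 1) = ∑ᶠ i : ℤ, v i * v i := by
  obtain ⟨N, hN⟩ := hfin
  replace hv : ∀ c, v c = Nat.card (contentRows lam c) := hv
  have hsupp : HasFiniteSupport v := by
    refine (Set.finite_Ico (-(N : ℤ)) (lam 0)).subset fun c hc => ?_
    rw [mem_support, hv, Nat.card_ne_zero, Set.nonempty_coe_sort] at hc
    exact mem_Ico_of_contentRows_nonempty hanti hN hc.1
  have key := add_finsum_mul_add_one_eq_finsum_mul_self (f := fun c => (v c : ℤ))
    (by fun_prop (disch := exact Nat.cast_zero))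
    (fun c hc => by simpa only [hv, Nat.cast_le, ← Nat.cast_add_one] using
      card_contentRows_unit_step_up_of_neg hanti hN hc)
    (fun c hc => by simpa only [hv, Nat.cast_le, ← Nat.cast_add_one] using
      card_contentRows_unit_step_down_of_nonneg hanti hN hc)
  have hcast (g : ℤ → ℕ) (hg : HasFiniteSupport g) :
      ((∑ᶠ c, g c : ℕ) : ℤ) = ∑ᶠ c, (g c : ℤ) :=
    (Nat.castAddMonoidHom ℤ).map_finsum hg
  apply Nat.cast_injective (R := ℤ)
  rw [Nat.cast_add, hcast _ (by fun_prop (disch := exact add_left_injective 1)),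
    hcast _ (by fun_prop)]
  push_cast
  exact key
end

section
/- For complex numbers q, ħ, z with |q| < 1 and |z| < 1, the q-binomial series satisfies Σ_{d=0}^∞ ((ħ;q)_d/(q;q)_d) z^d = Π_{n=0}^∞ (1 − zħq^n)/(1 − zq^n), where (x;q)_d = Π_{k=0}^{d−1}(1 − xq^k). -/
/-!
Let `F(w) = Σ_d c_d w^d` with `c_d = (a;q)_d / (q;q)_d`; it converges absolutely for `‖w‖ < 1`
by the ratio test, since `c_{d+1} / c_d = (1 - a qᵈ) / (1 - q^{d+1}) → 1`. That same recurrence,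
compared coefficientwise, gives `(1 - w) F(w) = (1 - a w) F(q w)`. Iterating,
`F(z) = Π_{n<N} (1 - z a qⁿ) / (1 - z qⁿ) · F(qᴺ z)`, and `F(qᴺ z) → F(0) = 1` by dominated
convergence, while the infinite product converges because its factors are `1 + O(‖q‖ⁿ)`.
-/

open Finset Filter Topology

variable {𝕜 : Type*} [NormedField 𝕜]

def qPochhammer (x q : 𝕜) (d : ℕ) : 𝕜 := ∏ k ∈ range d, (1 - x * q ^ k)

def qBinomialCoeff (a q : 𝕜) (d : ℕ) : 𝕜 := qPochhammer a q d / qPochhammer q q d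

noncomputable def qBinomialSeries (a q w : 𝕜) : 𝕜 :=
  ∑' d : ℕ, qBinomialCoeff a q d * w ^ d

lemma one_sub_ne_zero_of_norm_lt_one {x : 𝕜} (hx : ‖x‖ < 1) : 1 - x ≠ 0 := by
  rw [sub_ne_zero]
  rintro rfl
  simp at hx

lemma norm_pow_mul_lt_one {q w : 𝕜} (hq : ‖q‖ < 1) (hw : ‖w‖ < 1) (n : ℕ) :
    ‖q ^ n * w‖ < 1 := by
  rw [norm_mul, norm_pow]
  exact mul_lt_one_of_nonneg_of_lt_one_right (pow_le_one₀ (norm_nonneg q) hq.le)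
    (norm_nonneg w) hw

lemma qPochhammer_succ (x q : 𝕜) (d : ℕ) :
    qPochhammer x q (d + 1) = qPochhammer x q d * (1 - x * q ^ d) :=
  prod_range_succ _ d

lemma qBinomialCoeff_succ (a q : 𝕜) (d : ℕ) :
    qBinomialCoeff a q (d + 1) = qBinomialCoeff a q d * ((1 - a * q ^ d) / (1 - q * q ^ d)) := by
  rw [qBinomialCoeff, qBinomialCoeff, qPochhammer_succ, qPochhammer_succ, mul_div_mul_comm]

lemma tendsto_qBinomialCoeff_ratio (a : 𝕜) {q : 𝕜} (hq : ‖q‖ < 1) :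
    Tendsto (fun d : ℕ => (1 - a * q ^ d) / (1 - q * q ^ d)) atTop (𝓝 1) := by
  have hpow := tendsto_pow_atTop_nhds_zero_of_norm_lt_one hq
  have h := ((hpow.const_mul a).const_sub 1).div ((hpow.const_mul q).const_sub 1) (by simp)
  rwa [mul_zero, mul_zero, sub_zero, div_one] at h

lemma summable_norm_qBinomialCoeff_mul_pow (a : 𝕜) {q w : 𝕜} (hq : ‖q‖ < 1) (hw : ‖w‖ < 1) :
    Summable fun d : ℕ => ‖qBinomialCoeff a q d * w ^ d‖ := by
  obtain ⟨r, hr, hr1⟩ := exists_between hw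
  have hratio : ∀ᶠ d : ℕ in atTop, ‖(1 - a * q ^ d) / (1 - q * q ^ d)‖ * ‖w‖ < r := by
    refine ((tendsto_qBinomialCoeff_ratio a hq).norm.mul_const ‖w‖).eventually (gt_mem_nhds ?_)
    simpa using hr
  refine summable_of_ratio_norm_eventually_le hr1 ?_
  filter_upwards [hratio] with d hd
  rw [norm_norm, norm_norm, qBinomialCoeff_succ, pow_succ]
  calc ‖qBinomialCoeff a q d * ((1 - a * q ^ d) / (1 - q * q ^ d)) * (w ^ d * w)‖
      = ‖(1 - a * q ^ d) / (1 - q * q ^ d)‖ * ‖w‖ * ‖qBinomialCoeff a q d * w ^ d‖ := by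
        simp only [norm_mul]; ring
    _ ≤ r * ‖qBinomialCoeff a q d * w ^ d‖ := by gcongr

lemma qBinomialSeries_zero (a q : 𝕜) : qBinomialSeries a q 0 = 1 := by
  rw [qBinomialSeries, tsum_eq_single 0 fun d hd => by simp [hd]]
  simp [qBinomialCoeff, qPochhammer]

variable [CompleteSpace 𝕜]

lemma qBinomialSeries_functional_eq (a : 𝕜) {q w : 𝕜} (hq : ‖q‖ < 1) (hw : ‖w‖ < 1) :
    (1 - w) * qBinomialSeries a q w = (1 - a * w) * qBinomialSeries a q (q * w) := by
  have hqw : ‖q * w‖ < 1 := by simpa using norm_pow_mul_lt_one hq hw 1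
  have hS : HasSum _ (qBinomialSeries a q w) :=
    (summable_norm_qBinomialCoeff_mul_pow a hq hw).of_norm.hasSum
  have hT : HasSum _ (qBinomialSeries a q (q * w)) :=
    (summable_norm_qBinomialCoeff_mul_pow a hq hqw).of_norm.hasSum
  have hshift := (hasSum_nat_add_iff' 1).mpr (hS.sub hT)
  simp only [range_one, sum_singleton, pow_zero, sub_self, sub_zero] at hshift
  have hrec (d : ℕ) : qBinomialCoeff a q (d + 1) * w ^ (d + 1) -
      qBinomialCoeff a q (d + 1) * (q * w) ^ (d + 1) =
      w * (qBinomialCoeff a q d * w ^ d) - a * w * (qBinomialCoeff a q d * (q * w) ^ d) := by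
    have hc := qBinomialCoeff_succ a q d
    have hρ : (1 - a * q ^ d) / (1 - q * q ^ d) * (1 - q * q ^ d) = 1 - a * q ^ d :=
      div_mul_cancel₀ _ (one_sub_ne_zero_of_norm_lt_one (by
        rw [← pow_succ', norm_pow]; exact pow_lt_one₀ (norm_nonneg q) hq d.succ_ne_zero))
    linear_combination
      (w ^ (d + 1) * (1 - q * q ^ d)) * hc + (qBinomialCoeff a q d * w ^ (d + 1)) * hρ
  simp only [hrec] at hshift
  linear_combination hshift.unique ((hS.mul_left w).sub (hT.mul_left (a * w)))

lemma qBinomialSeries_eq_prod_mul (a : 𝕜) {q z : 𝕜} (hq : ‖q‖ < 1) (hz : ‖z‖ < 1) (N : ℕ) :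
    qBinomialSeries a q z =
      (∏ n ∈ range N, (1 - z * a * q ^ n) / (1 - z * q ^ n)) *
        qBinomialSeries a q (q ^ N * z) := by
  induction N with
  | zero => simp
  | succ N ih =>
    have hfun := qBinomialSeries_functional_eq a hq (norm_pow_mul_lt_one hq hz N)
    have hne := one_sub_ne_zero_of_norm_lt_one (norm_pow_mul_lt_one hq hz N)
    rw [show q * (q ^ N * z) = q ^ (N + 1) * z by ring] at hfun
    rw [ih, prod_range_succ, mul_assoc, div_mul_eq_mul_div]
    congr 1
    rw [eq_div_iff (by rwa [mul_comm z])]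
    linear_combination hfun

lemma tendsto_qBinomialSeries_pow_mul (a : 𝕜) {q z : 𝕜} (hq : ‖q‖ < 1) (hz : ‖z‖ < 1) :
    Tendsto (fun N : ℕ => qBinomialSeries a q (q ^ N * z)) atTop (𝓝 1) := by
  rw [← qBinomialSeries_zero a q]
  refine tendsto_tsum_of_dominated_convergence (summable_norm_qBinomialCoeff_mul_pow a hq hz)
    (fun d => ?_) (Eventually.of_forall fun N d => ?_)
  · have := (tendsto_pow_atTop_nhds_zero_of_norm_lt_one hq).mul_const z
    simpa using (this.pow d).const_mul (qBinomialCoeff a q d)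
  · simp only [norm_mul, norm_pow]
    gcongr
    exact mul_le_of_le_one_left (norm_nonneg z) (pow_le_one₀ (norm_nonneg q) hq.le)

lemma multipliable_qBinomial_factors (a : 𝕜) {q z : 𝕜} (hq : ‖q‖ < 1) (hz : ‖z‖ < 1) :
    Multipliable fun n : ℕ => (1 - z * a * q ^ n) / (1 - z * q ^ n) := by
  have hne n : 1 - z * q ^ n ≠ 0 := by
    rw [mul_comm]; exact one_sub_ne_zero_of_norm_lt_one (norm_pow_mul_lt_one hq hz n)
  have hfactor n : (1 - z * a * q ^ n) / (1 - z * q ^ n) =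
      1 + z * q ^ n * (1 - a) / (1 - z * q ^ n) := by
    field_simp [hne n]; ring
  simp_rw [hfactor]
  refine multipliable_one_add_of_summable <| .of_nonneg_of_le (fun _ => norm_nonneg _)
    (fun n => ?_) ((summable_geometric_of_lt_one (norm_nonneg q) hq).mul_left
      (‖z‖ * ‖1 - a‖ / (1 - ‖z‖)))
  have hzq : ‖z * q ^ n‖ ≤ ‖z‖ := by
    rw [norm_mul, norm_pow]
    exact mul_le_of_le_one_right (norm_nonneg z) (pow_le_one₀ (norm_nonneg q) hq.le)
  have hden : 1 - ‖z‖ ≤ ‖1 - z * q ^ n‖ := by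
    linarith [norm_one (α := 𝕜) ▸ norm_sub_norm_le (1 : 𝕜) (z * q ^ n)]
  calc ‖z * q ^ n * (1 - a) / (1 - z * q ^ n)‖
      = ‖z‖ * ‖1 - a‖ * ‖q‖ ^ n / ‖1 - z * q ^ n‖ := by
        rw [norm_div, norm_mul, norm_mul, norm_pow]; ring
    _ ≤ ‖z‖ * ‖1 - a‖ * ‖q‖ ^ n / (1 - ‖z‖) := by gcongr
    _ = ‖z‖ * ‖1 - a‖ / (1 - ‖z‖) * ‖q‖ ^ n := by ring

/-- The q-binomial series: for `|q| < 1` and `|z| < 1`,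
`Σ_{d≥0} ((ħ;q)_d / (q;q)_d) z^d = Π_{n≥0} (1 - zħqⁿ)/(1 - zqⁿ)`,
where `(x;q)_d = Π_{k<d} (1 - x qᵏ)`. -/
theorem stmt_1 (q hbar z : ℂ) (hq : ‖q‖ < 1) (hz : ‖z‖ < 1) :
    ∑' d : ℕ,
      ((∏ k ∈ Finset.range d, (1 - hbar * q ^ k)) /
        (∏ k ∈ Finset.range d, (1 - q * q ^ k))) * z ^ d
      = ∏' n : ℕ, (1 - z * hbar * q ^ n) / (1 - z * q ^ n) := by
  show qBinomialSeries hbar q z = _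
  have hlim := (multipliable_qBinomial_factors hbar hq hz).hasProd.tendsto_prod_nat.mul
    (tendsto_qBinomialSeries_pow_mul hbar hq hz)
  simp_rw [← qBinomialSeries_eq_prod_mul hbar hq hz, mul_one] at hlim
  exact tendsto_nhds_unique tendsto_const_nhds hlim
end

section
/- Let λ be a nonempty Young diagram with content multiplicities v_i (number of boxes of content i), supported on −r ≤ i ≤ s with v_{−r}, v_s > 0. Define τ_λ(i) ∈ {+,−} by: τ_λ(i) = + if (i ≥ 0 and v_i − v_{i+1} = 1) or (i < 0 and v_i − v_{i+1} = 0), and τ_λ(i) = − otherwise. Then the map sending a pair (i₀, i₁) with i₀ < i₁, τ_λ(i₀) = −, τ_λ(i₁) = + to the box of λ in row a and column b, where a = #{i ≥ i₁ : τ_λ(i) = +} and b = #{i ≤ i₀ : τ_λ(i) = −}, is a bijection between the set of such pairs and the set of boxes of λ. In particular #{(i₀,i₁) : i₀ < i₁, τ_λ(i₀) = −, τ_λ(i₁) = +} = |λ|. -/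
/-!
Write `g a = λ_a - a` (`rowEnd`) for the content of the last box of row `a`. Counting the
boxes of content `c` row by row gives `v_c + max(0, -c) = #{a ≥ 1 : c ≤ g a}`; as `g` is
strictly decreasing, the right side drops by one at `c` exactly when `c = g a` for some row
`a ≥ 1`. So `τ(i) = +` exactly on the set `{g a : a ≥ 1}`, and a pair `(i₀, i₁)` is `i₁ = g a`
together with a `-` below `g a`. There are `a` pluses at or above `g a`, and `g a + a = λ_a`
minuses below it, which `i₀ ↦ #{i ≤ i₀ : τ(i) = -}` enumerates increasingly onto `1, …, λ_a`.
-/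

noncomputable def countLE (S : Set ℤ) (j : ℤ) : ℕ := Nat.card {i | i ≤ j ∧ i ∈ S}

section CountLE

variable {S : Set ℤ}

theorem finite_le_and_mem (hS : BddBelow S) (j : ℤ) : {i | i ≤ j ∧ i ∈ S}.Finite := by
  obtain ⟨L, hL⟩ := hS
  exact (Set.finite_Icc L j).subset fun i hi => ⟨hL hi.2, hi.1⟩

theorem countLE_mono (hS : BddBelow S) : Monotone (countLE S) := by
  intro i j hij
  simp only [countLE, Nat.card_coe_set_eq]
  exact Set.ncard_le_ncard (fun k hk => ⟨hk.1.trans hij, hk.2⟩) (finite_le_and_mem hS j)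

theorem countLE_strictMonoOn (hS : BddBelow S) : StrictMonoOn (countLE S) S := by
  intro i _ j hj hij
  simp only [countLE, Nat.card_coe_set_eq]
  refine Set.ncard_lt_ncard ?_ (finite_le_and_mem hS j)
  exact ⟨fun k hk => ⟨hk.1.trans hij.le, hk.2⟩, fun h => (h ⟨le_rfl, hj⟩).1.not_gt hij⟩

theorem countLE_of_mem (hS : BddBelow S) {j : ℤ} (hj : j ∈ S) :
    countLE S j = countLE S (j - 1) + 1 := by
  have hsplit : {i | i ≤ j ∧ i ∈ S} = insert j {i | i ≤ j - 1 ∧ i ∈ S} := by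
    ext i
    rw [Set.mem_insert_iff]
    constructor
    · rintro ⟨hij, hi⟩
      rcases hij.eq_or_lt with rfl | hlt
      exacts [Or.inl rfl, Or.inr ⟨by omega, hi⟩]
    · rintro (rfl | ⟨hij, hi⟩)
      exacts [⟨le_rfl, hj⟩, ⟨by omega, hi⟩]
  simp only [countLE, Nat.card_coe_set_eq, hsplit]
  exact Set.ncard_insert_of_notMem (fun h => by simp at h) (finite_le_and_mem hS _)

theorem countLE_of_notMem {j : ℤ} (hj : j ∉ S) : countLE S j = countLE S (j - 1) := by
  have hsplit : {i | i ≤ j ∧ i ∈ S} = {i | i ≤ j - 1 ∧ i ∈ S} := by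
    ext i
    refine ⟨fun ⟨hij, hi⟩ => ⟨?_, hi⟩, fun ⟨hij, hi⟩ => ⟨by omega, hi⟩⟩
    rcases hij.eq_or_lt with rfl | hlt
    exacts [absurd hi hj, by omega]
  simp only [countLE, hsplit]

theorem one_le_countLE (hS : BddBelow S) {j : ℤ} (hj : j ∈ S) : 1 ≤ countLE S j := by
  rw [countLE_of_mem hS hj]
  omega

theorem countLE_eq_zero {L j : ℤ} (hL : L ∈ lowerBounds S) (hj : j < L) : countLE S j = 0 := by
  have hempty : {i | i ≤ j ∧ i ∈ S} = ∅ :=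
    Set.eq_empty_of_forall_notMem fun i hi => by have := hL hi.2; have := hi.1; omega
  simp only [countLE, hempty, Nat.card_coe_set_eq, Set.ncard_empty]

theorem exists_countLE_eq (hS : BddBelow S) {b : ℕ} {j : ℤ} (hb : 1 ≤ b)
    (hbj : b ≤ countLE S j) : ∃ i ∈ S, i ≤ j ∧ countLE S i = b := by
  obtain ⟨L, hL⟩ := hS
  obtain ⟨i, hbi, hmin⟩ := Int.exists_least_of_bdd (P := fun k => b ≤ countLE S k)
    ⟨L, fun k hk => by
      by_contra h
      rw [countLE_eq_zero hL (not_le.1 h)] at hk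
      omega⟩ ⟨j, hbj⟩
  have hprev : countLE S (i - 1) < b := by
    by_contra h
    have := hmin _ (not_lt.1 h)
    omega
  by_cases hi : i ∈ S
  · refine ⟨i, hi, hmin j hbj, ?_⟩
    rw [countLE_of_mem ⟨L, hL⟩ hi] at hbi ⊢
    omega
  · rw [countLE_of_notMem hi] at hbi
    omega

end CountLE

def rowEnd (lam : ℕ → ℕ) (a : ℕ) : ℤ := lam a - a

/-- The Maya diagram of `λ`: the positions where `τ_λ = +`. -/
def mayaSet (lam : ℕ → ℕ) : Set ℤ := rowEnd lam '' Set.Ici 1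

section Maya

variable {lam : ℕ → ℕ}

theorem rowEnd_strictAnti (hanti : Antitone lam) : StrictAnti (rowEnd lam) := by
  intro a b hab
  have := hanti hab.le
  simp only [rowEnd]
  omega

theorem rowEnd_eq_neg (hanti : Antitone lam) {N a : ℕ} (hN : lam N = 0) (ha : N ≤ a) :
    rowEnd lam a = -a := by
  have := hanti ha
  simp only [rowEnd]
  omega

theorem finite_rowEnd_ge (hanti : Antitone lam) (c : ℤ) :
    {a : ℕ | 1 ≤ a ∧ c ≤ rowEnd lam a}.Finite :=
  (Set.finite_Iic (lam 0 - c).toNat).subset fun a ha => by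
    have := hanti (Nat.zero_le a)
    have := ha.2
    simp only [rowEnd] at this
    simp only [Set.mem_Iic]
    omega

theorem card_boxes_content_add (hanti : Antitone lam) (c : ℤ) :
    Nat.card {p : ℕ × ℕ | 1 ≤ p.1 ∧ 1 ≤ p.2 ∧ p.2 ≤ lam p.1 ∧ (p.2 : ℤ) - (p.1 : ℤ) = c}
      + (-c).toNat = Set.ncard {a : ℕ | 1 ≤ a ∧ c ≤ rowEnd lam a} := by
  set B := {p : ℕ × ℕ | 1 ≤ p.1 ∧ 1 ≤ p.2 ∧ p.2 ≤ lam p.1 ∧ (p.2 : ℤ) - (p.1 : ℤ) = c}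
  have hsplit : {a : ℕ | 1 ≤ a ∧ c ≤ rowEnd lam a} = Prod.fst '' B ∪ Set.Icc 1 (-c).toNat := by
    ext a
    simp only [Set.mem_union, Set.mem_image, Set.mem_Icc, rowEnd]
    constructor
    · rintro ⟨ha, hc⟩
      by_cases hac : 1 ≤ (a : ℤ) + c
      · refine Or.inl ⟨(a, (a + c).toNat), ⟨ha, ?_, ?_, ?_⟩, rfl⟩ <;> dsimp only <;> omega
      · exact Or.inr ⟨ha, by omega⟩
    · rintro (⟨p, ⟨hp1, -, hp2, hp3⟩, rfl⟩ | ⟨ha, hac⟩)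
      exacts [⟨hp1, by omega⟩, ⟨ha, by omega⟩]
  have hfin := finite_rowEnd_ge hanti c
  rw [hsplit] at hfin ⊢
  have hinj : Set.InjOn Prod.fst B := fun p hp q hq h =>
    Prod.ext h (by have := hp.2.2.2; have := hq.2.2.2; omega)
  rw [Set.ncard_union_eq ?disj (hfin.subset Set.subset_union_left)
    (hfin.subset Set.subset_union_right), hinj.ncard_image, Set.ncard_Icc_nat,
    Nat.card_coe_set_eq]
  · omega
  · rw [Set.disjoint_left]
    rintro _ ⟨p, ⟨hp₁, hp₂, -, hp⟩, rfl⟩ ⟨-, ha⟩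
    omega

open Classical in
theorem ncard_rowEnd_ge (hanti : Antitone lam) (c : ℤ) :
    Set.ncard {a : ℕ | 1 ≤ a ∧ c ≤ rowEnd lam a}
      = Set.ncard {a : ℕ | 1 ≤ a ∧ c + 1 ≤ rowEnd lam a} + if c ∈ mayaSet lam then 1 else 0 := by
  have hinj := (rowEnd_strictAnti hanti).injective
  split_ifs with hc
  · obtain ⟨a₀, ha₀, rfl⟩ := hc
    have hsplit : {a : ℕ | 1 ≤ a ∧ rowEnd lam a₀ ≤ rowEnd lam a}
        = insert a₀ {a : ℕ | 1 ≤ a ∧ rowEnd lam a₀ + 1 ≤ rowEnd lam a} := by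
      ext a
      rw [Set.mem_insert_iff]
      constructor
      · rintro ⟨ha, hle⟩
        rcases hle.eq_or_lt with heq | hlt
        exacts [Or.inl (hinj heq.symm), Or.inr ⟨ha, hlt⟩]
      · rintro (rfl | ⟨ha, hlt⟩)
        exacts [⟨ha₀, le_rfl⟩, ⟨ha, by omega⟩]
    rw [hsplit, Set.ncard_insert_of_notMem (fun h => by have := h.2; omega)
      ((finite_rowEnd_ge hanti _).subset fun a ha => ⟨ha.1, by have := ha.2; omega⟩)]
  · congr 1
    ext a
    refine ⟨fun ⟨ha, hle⟩ => ⟨ha, ?_⟩, fun ⟨ha, hlt⟩ => ⟨ha, by omega⟩⟩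
    rcases hle.eq_or_lt with heq | hlt
    exacts [absurd ⟨a, ha, heq.symm⟩ hc, hlt]

theorem tau_iff_mem_mayaSet (hanti : Antitone lam) {v : ℤ → ℕ}
    (hv : ∀ c : ℤ, v c = Nat.card
      {p : ℕ × ℕ | 1 ≤ p.1 ∧ 1 ≤ p.2 ∧ p.2 ≤ lam p.1 ∧ (p.2 : ℤ) - (p.1 : ℤ) = c})
    {τ : ℤ → Bool}
    (hτ : ∀ i : ℤ, τ i = true ↔
      ((0 ≤ i ∧ (v i : ℤ) - (v (i + 1) : ℤ) = 1) ∨ (i < 0 ∧ v i = v (i + 1))))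
    (i : ℤ) : τ i = true ↔ i ∈ mayaSet lam := by
  have hi := card_boxes_content_add hanti i
  have hi' := card_boxes_content_add hanti (i + 1)
  have hstep := ncard_rowEnd_ge hanti i
  rw [← hv] at hi hi'
  rw [hτ]
  split_ifs at hstep with hmem <;> simp only [hmem, iff_true, iff_false] <;> omega

theorem neg_le_of_notMem_mayaSet (hanti : Antitone lam) {N : ℕ} (hN : lam N = 0) {i : ℤ}
    (hi : i ∉ mayaSet lam) : -(N : ℤ) ≤ i := by
  by_contra h
  exact hi ⟨(-i).toNat, by simp only [Set.mem_Ici]; omega,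
    by rw [rowEnd_eq_neg hanti hN (by omega)]; omega⟩

theorem card_mayaSet_ge_rowEnd (hanti : Antitone lam) {a : ℕ} (ha : 1 ≤ a) :
    Nat.card {i | rowEnd lam a ≤ i ∧ i ∈ mayaSet lam} = a := by
  have hg := rowEnd_strictAnti hanti
  have himage : {i | rowEnd lam a ≤ i ∧ i ∈ mayaSet lam} = rowEnd lam '' Set.Icc 1 a := by
    ext i
    constructor
    · rintro ⟨hle, a', ha', rfl⟩
      exact ⟨a', ⟨ha', hg.le_iff_ge.1 hle⟩, rfl⟩
    · rintro ⟨a', ⟨ha', hle⟩, rfl⟩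
      exact ⟨hg.antitone hle, a', ha', rfl⟩
  rw [himage, Nat.card_image_of_injective hg.injective, Nat.card_coe_set_eq, Set.ncard_Icc_nat]
  omega

/-- The `-`'s below `rowEnd lam a`: among the `rowEnd lam a + M` integers in `[-M, rowEnd lam a)`,
the `M - a` values `rowEnd lam a'` with `a < a' ≤ M` are `+`. -/
theorem countLE_compl_mayaSet_rowEnd (hanti : Antitone lam) {N : ℕ} (hN : lam N = 0) (a : ℕ) :
    countLE (mayaSet lam)ᶜ (rowEnd lam a - 1) = lam a := by
  classical
  have hg := rowEnd_strictAnti hanti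
  set M := max N a
  set T := Finset.Ico (-(M : ℤ)) (rowEnd lam a)
  have hplus : T.filter (· ∈ mayaSet lam) = (Finset.Ioc a M).image (rowEnd lam) := by
    ext i
    simp only [T, Finset.mem_filter, Finset.mem_Ico, Finset.mem_image, Finset.mem_Ioc]
    constructor
    · rintro ⟨⟨hlo, hhi⟩, a', -, rfl⟩
      refine ⟨a', ⟨hg.lt_iff_gt.1 hhi, ?_⟩, rfl⟩
      by_contra h
      rw [rowEnd_eq_neg hanti hN (by omega)] at hlo
      omega
    · rintro ⟨a', ⟨hlt, hle⟩, rfl⟩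
      refine ⟨⟨?_, hg hlt⟩, a', Set.mem_Ici.2 (by omega), rfl⟩
      simp only [rowEnd]
      omega
  have hminus : (T.filter (· ∉ mayaSet lam) : Set ℤ)
      = {i | i ≤ rowEnd lam a - 1 ∧ i ∈ (mayaSet lam)ᶜ} := by
    ext i
    simp only [T, Finset.coe_filter, Finset.mem_Ico, Set.mem_compl_iff]
    constructor
    · rintro ⟨⟨-, hi⟩, hm⟩
      exact ⟨by omega, hm⟩
    · rintro ⟨hi, hm⟩
      exact ⟨⟨(neg_le_of_notMem_mayaSet hanti hN hm).trans' (by omega), by omega⟩, hm⟩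
  have hcount := Finset.card_filter_add_card_filter_not (s := T) (· ∈ mayaSet lam)
  rw [hplus, Finset.card_image_of_injective _ hg.injective, Nat.card_Ioc, Int.card_Ico,
    ← Set.ncard_coe_finset, hminus] at hcount
  simp only [countLE, Nat.card_coe_set_eq]
  simp only [rowEnd] at hcount ⊢
  omega

theorem bijOn_mayaSet_pairs (hanti : Antitone lam) {N : ℕ} (hN : lam N = 0) :
    Set.BijOn
      (fun p : ℤ × ℤ => (Nat.card {i | p.2 ≤ i ∧ i ∈ mayaSet lam}, countLE (mayaSet lam)ᶜ p.1))
      {p | p.1 < p.2 ∧ p.1 ∉ mayaSet lam ∧ p.2 ∈ mayaSet lam}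
      {b : ℕ × ℕ | 1 ≤ b.1 ∧ 1 ≤ b.2 ∧ b.2 ≤ lam b.1} := by
  have hS : BddBelow (mayaSet lam)ᶜ := ⟨-N, fun _ hi => neg_le_of_notMem_mayaSet hanti hN hi⟩
  refine ⟨?maps, ?inj, ?surj⟩
  · rintro ⟨i₀, _⟩ ⟨hlt, hi₀, a, ha, rfl⟩
    dsimp only at hlt hi₀ ⊢
    rw [card_mayaSet_ge_rowEnd hanti ha]
    refine ⟨ha, one_le_countLE hS hi₀, ?_⟩
    rw [← countLE_compl_mayaSet_rowEnd hanti hN a]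
    exact countLE_mono hS (by omega)
  · rintro ⟨i₀, _⟩ ⟨-, hi₀, a, ha, rfl⟩ ⟨i₀', _⟩ ⟨-, hi₀', a', ha', rfl⟩ h
    simp only [Prod.mk.injEq, card_mayaSet_ge_rowEnd hanti ha,
      card_mayaSet_ge_rowEnd hanti ha'] at h
    obtain ⟨rfl, h⟩ := h
    exact Prod.ext ((countLE_strictMonoOn hS).injOn hi₀ hi₀' h) rfl
  · rintro ⟨a, b⟩ ⟨ha, hb, hba⟩
    obtain ⟨i, hi, hle, rfl⟩ := exists_countLE_eq hS hb
      (hba.trans (countLE_compl_mayaSet_rowEnd hanti hN a).ge)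
    exact ⟨(i, rowEnd lam a), ⟨by omega, hi, a, ha, rfl⟩,
      by simp only [card_mayaSet_ge_rowEnd hanti ha]⟩

end Maya

theorem stmt_8_general (lam : ℕ → ℕ) (hanti : Antitone lam) (hfin : ∃ N, lam N = 0)
    (v : ℤ → ℕ)
    (hv : ∀ c : ℤ, v c = Nat.card
      {p : ℕ × ℕ | 1 ≤ p.1 ∧ 1 ≤ p.2 ∧ p.2 ≤ lam p.1 ∧ (p.2 : ℤ) - (p.1 : ℤ) = c})
    (τ : ℤ → Bool)
    (hτ : ∀ i : ℤ, τ i = true ↔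
      ((0 ≤ i ∧ (v i : ℤ) - (v (i + 1) : ℤ) = 1) ∨ (i < 0 ∧ v i = v (i + 1))))
    (f : ℤ × ℤ → ℕ × ℕ)
    (hf : ∀ p : ℤ × ℤ, f p =
      (Nat.card {i : ℤ | p.2 ≤ i ∧ τ i = true}, Nat.card {i : ℤ | i ≤ p.1 ∧ τ i = false})) :
    Set.BijOn f {p : ℤ × ℤ | p.1 < p.2 ∧ τ p.1 = false ∧ τ p.2 = true}
        {b : ℕ × ℕ | 1 ≤ b.1 ∧ 1 ≤ b.2 ∧ b.2 ≤ lam b.1} ∧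
      Nat.card {p : ℤ × ℤ | p.1 < p.2 ∧ τ p.1 = false ∧ τ p.2 = true}
        = Nat.card {b : ℕ × ℕ | 1 ≤ b.1 ∧ 1 ≤ b.2 ∧ b.2 ≤ lam b.1} := by
  obtain ⟨N, hN⟩ := hfin
  have hplus := tau_iff_mem_mayaSet hanti hv hτ
  have hminus (i : ℤ) : τ i = false ↔ i ∈ (mayaSet lam)ᶜ := by
    rw [Set.mem_compl_iff, ← hplus, Bool.not_eq_true]
  have hf' : f = fun p => (Nat.card {i | p.2 ≤ i ∧ i ∈ mayaSet lam},
      countLE (mayaSet lam)ᶜ p.1) := by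
    funext p
    simp only [hf, hplus, hminus, countLE]
  have hpairs : {p : ℤ × ℤ | p.1 < p.2 ∧ τ p.1 = false ∧ τ p.2 = true}
      = {p | p.1 < p.2 ∧ p.1 ∉ mayaSet lam ∧ p.2 ∈ mayaSet lam} := by
    simp only [hplus, hminus, Set.mem_compl_iff]
  have hbij := bijOn_mayaSet_pairs hanti hN
  rw [← hf', ← hpairs] at hbij
  exact ⟨hbij, Nat.card_congr (hbij.equiv f)⟩

/-- Let `λ` be a nonempty Young diagram (rows 1-indexed: box `(a,b)` belongs to `λ`
iff `1 ≤ a`, `1 ≤ b ≤ lam a`; its content is `b - a`), with content multiplicities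
`vᵢ`. Define `τ_λ(i) = +` (encoded `true`) iff `(i ≥ 0 and vᵢ - v_{i+1} = 1)` or
`(i < 0 and vᵢ = v_{i+1})`, else `τ_λ(i) = -` (encoded `false`). Then the map
`(i₀, i₁) ↦ (a, b)` with `a = #{i ≥ i₁ : τ(i) = +}`, `b = #{i ≤ i₀ : τ(i) = -}`
is a bijection from `{(i₀,i₁) : i₀ < i₁, τ(i₀) = -, τ(i₁) = +}` onto the set of
boxes of `λ`; in particular the two sets have the same cardinality. -/
theorem stmt_8 (lam : ℕ → ℕ) (hanti : Antitone lam) (hfin : ∃ N, lam N = 0)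
    (hne : 1 ≤ lam 1)
    (v : ℤ → ℕ)
    (hv : ∀ c : ℤ, v c = Nat.card
      {p : ℕ × ℕ | 1 ≤ p.1 ∧ 1 ≤ p.2 ∧ p.2 ≤ lam p.1 ∧ (p.2 : ℤ) - (p.1 : ℤ) = c})
    (τ : ℤ → Bool)
    (hτ : ∀ i : ℤ, τ i = true ↔
      ((0 ≤ i ∧ (v i : ℤ) - (v (i + 1) : ℤ) = 1) ∨ (i < 0 ∧ v i = v (i + 1))))
    (f : ℤ × ℤ → ℕ × ℕ)
    (hf : ∀ p : ℤ × ℤ, f p =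
      (Nat.card {i : ℤ | p.2 ≤ i ∧ τ i = true}, Nat.card {i : ℤ | i ≤ p.1 ∧ τ i = false})) :
    Set.BijOn f {p : ℤ × ℤ | p.1 < p.2 ∧ τ p.1 = false ∧ τ p.2 = true}
        {b : ℕ × ℕ | 1 ≤ b.1 ∧ 1 ≤ b.2 ∧ b.2 ≤ lam b.1} ∧
      Nat.card {p : ℤ × ℤ | p.1 < p.2 ∧ τ p.1 = false ∧ τ p.2 = true}
        = Nat.card {b : ℕ × ℕ | 1 ≤ b.1 ∧ 1 ≤ b.2 ∧ b.2 ≤ lam b.1} :=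
  stmt_8_general lam hanti hfin v hv τ hτ f hf
end
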